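/- Let μ ∈ {0,1} and let u₀ ∈ H¹(ℝ²) satisfy ‖∇u₀‖_{L²} < 1 and ‖u₀‖_{L²}/(1 − ‖∇u₀‖²_{L²}) < √(π/κ), where κ := sup_{‖u‖_{H¹} ≤ 1} ∫_{ℝ²}(e^{4π|u|²}−1)dx. Then the maximal solution of the focusing NLS i∂_t u + Δu = −f_μ(u), u(0) = u₀, exists globally in time (T* = +∞). -/

import Mathlib

open MeasureTheory Real Filter
open scoped Topology ENNReal

noncomputable section

abbrev E2 : Type := EuclideanSpace ℝ (Fin 2)

/-- Squared `L²` norm. -/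
def l2Sq (u : E2 → ℂ) : ℝ := ∫ x : E2, ‖u x‖ ^ 2

/-- Squared `L²` norm of the gradient. -/
def gradSq (u : E2 → ℂ) : ℝ := ∫ x : E2, ‖fderiv ℝ u x‖ ^ 2

/-- Membership in `H¹(ℝ²)`. -/
def MemH1 (u : E2 → ℂ) : Prop :=
  MemLp u 2 volume ∧ Differentiable ℝ u ∧ MemLp (fun x => fderiv ℝ u x) 2 volume

/-- Integrability of all exponentials `e^{a|u|²} - 1`. -/
def ExpIntegrable (u : E2 → ℂ) : Prop :=
  ∀ a : ℝ, 0 < a → Integrable (fun x : E2 => Real.exp (a * ‖u x‖ ^ 2) - 1)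

/-- The nonlinearity `f_μ`. -/
def fmu (μ : ℝ) (z : ℂ) : ℂ :=
  ((Real.exp (4 * π * ‖z‖ ^ 2) - 1 - 4 * π * μ * ‖z‖ ^ 2 : ℝ) : ℂ) * z

/-- The potential `F_μ`. -/
def Fmu (μ : ℝ) (z : ℂ) : ℝ :=
  (Real.exp (4 * π * ‖z‖ ^ 2) - 1 - 4 * π * ‖z‖ ^ 2 - 8 * π ^ 2 * μ * ‖z‖ ^ 4) / (8 * π)

/-- `Re (z̄ f_μ(z))`. -/
def nlDensity (μ : ℝ) (z : ℂ) : ℝ :=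
  (Real.exp (4 * π * ‖z‖ ^ 2) - 1 - 4 * π * μ * ‖z‖ ^ 2) * ‖z‖ ^ 2

/-- Energy. -/
def Emu (μ : ℝ) (u : E2 → ℂ) : ℝ := gradSq u / 2 - ∫ x : E2, Fmu μ (u x)

/-- Action. -/
def Smu (μ : ℝ) (u : E2 → ℂ) : ℝ := Emu μ u + l2Sq u / 2

/-- The functional `P_μ`. -/
def Pmu (μ : ℝ) (u : E2 → ℂ) : ℝ := l2Sq u / 2 - ∫ x : E2, Fmu μ (u x)

/-- The virial functional `I_μ`. -/
def Imu (μ : ℝ) (u : E2 → ℂ) : ℝ :=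
  gradSq u - ∫ x : E2, (nlDensity μ (u x) - 2 * Fmu μ (u x))

/-- Laplacian on `ℝ²` (sum of second directional derivatives). -/
def lap (v : E2 → ℂ) (x : E2) : ℂ :=
  ∑ i : Fin 2, fderiv ℝ (fun y => fderiv ℝ v y (EuclideanSpace.single i 1)) x
      (EuclideanSpace.single i 1)

/-- `φ` is a (pointwise) solution to the elliptic equation `-Δφ + φ = f_μ(φ)`. -/
def IsEllipticSolution (μ : ℝ) (φ : E2 → ℂ) : Prop :=
  ∀ x, -lap φ x + φ x = fmu μ (φ x)

/-- Ground state for `-ΔQ + Q = f_μ(Q)`. -/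
structure IsGroundState (μ : ℝ) (Q : E2 → ℂ) : Prop where
  mem : MemH1 Q
  expint : ExpIntegrable Q
  nonzero : ¬ Q =ᵐ[volume] (0 : E2 → ℂ)
  radial : ∀ x y : E2, ‖x‖ = ‖y‖ → Q x = Q y
  solves : IsEllipticSolution μ Q
  minimal : ∀ φ : E2 → ℂ, MemH1 φ → ExpIntegrable φ → ¬ φ =ᵐ[volume] (0 : E2 → ℂ) →
    IsEllipticSolution μ φ → Smu μ Q ≤ Smu μ φ
  grad_pos : 0 < gradSq Q
  grad_lt_one : gradSq Q < 1

/-!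
Energy conservation keeps the gradient below the critical level `1`. Rescaling `w ↦ w(λ ·)`
preserves `‖∇w‖₂²` and divides `‖w‖₂²` and `∫ (e^{4π|w|²} - 1)` by `λ²`; the choice
`λ² = ‖w‖₂² / (1 - ‖∇w‖₂²)` puts the rescaled function on the unit sphere of `H¹`, so the
Trudinger–Moser supremum gives `∫ (e^{4π|w|²} - 1) ≤ κ ‖w‖₂² / (1 - ‖∇w‖₂²)`.
As `0 ≤ F_μ(z) ≤ (e^{4π|z|²} - 1)/(8π)`, conservation of mass and energy yields
`(‖∇u(t)‖₂² - ‖∇u₀‖₂²) · 4π · (1 - ‖∇u(t)‖₂²) ≤ κ M(u₀)`.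
At the level `c = (1 + ‖∇u₀‖₂²)/2` the left side is `π (1 - ‖∇u₀‖₂²)²`, which the smallness
condition puts above `κ M(u₀)`; so by continuity `‖∇u(t)‖₂² < c < 1` on `[0, T*)`, which is
incompatible with the blow-up alternative when `T* < ∞`.
-/

def moserIntegral (u : E2 → ℂ) : ℝ := ∫ x : E2, (Real.exp (4 * π * ‖u x‖ ^ 2) - 1)

def IsMoserBound (κ : ℝ) : Prop :=
  ∀ v : E2 → ℂ, MemH1 v → l2Sq v + gradSq v ≤ 1 → moserIntegral v ≤ κ

lemma l2Sq_nonneg (u : E2 → ℂ) : 0 ≤ l2Sq u := integral_nonneg fun _ => by positivity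

lemma Fmu_nonneg {μ : ℝ} (hμ : μ ≤ 1) (z : ℂ) : 0 ≤ Fmu μ z := by
  have hs : 0 ≤ 4 * π * ‖z‖ ^ 2 := by positivity
  have hexp := Real.quadratic_le_exp_of_nonneg hs
  have hμs : μ * (4 * π * ‖z‖ ^ 2) ^ 2 ≤ (4 * π * ‖z‖ ^ 2) ^ 2 :=
    mul_le_of_le_one_left (sq_nonneg _) hμ
  unfold Fmu
  apply div_nonneg _ (by positivity)
  nlinarith

lemma Fmu_le {μ : ℝ} (hμ : 0 ≤ μ) (z : ℂ) :
    Fmu μ z ≤ (Real.exp (4 * π * ‖z‖ ^ 2) - 1) / (8 * π) := by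
  have : 0 ≤ 4 * π * ‖z‖ ^ 2 + 8 * π ^ 2 * μ * ‖z‖ ^ 4 := by positivity
  exact div_le_div_of_nonneg_right (by linarith) (by positivity)

lemma integral_Fmu_le {μ : ℝ} (hμ₀ : 0 ≤ μ) (hμ₁ : μ ≤ 1) {u : E2 → ℂ}
    (hu : ExpIntegrable u) : ∫ x, Fmu μ (u x) ≤ moserIntegral u / (8 * π) := by
  rw [moserIntegral, ← integral_div]
  exact integral_mono_of_nonneg (.of_forall fun x => Fmu_nonneg hμ₁ (u x))
    ((hu _ (by positivity)).div_const _) (.of_forall fun x => Fmu_le hμ₀ (u x))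

lemma MeasureTheory.MemLp.comp_smul {E F : Type*} [NormedAddCommGroup E] [NormedSpace ℝ E]
    [MeasurableSpace E] [BorelSpace E] [FiniteDimensional ℝ E] [NormedAddCommGroup F]
    {μ : Measure E} [μ.IsAddHaarMeasure] {f : E → F} {p : ℝ≥0∞} (hf : MemLp f p μ) {R : ℝ}
    (hR : R ≠ 0) :
    MemLp (fun x => f (R • x)) p μ := by
  refine MemLp.comp_of_map ?_ (measurable_const_smul R).aemeasurable
  rw [Measure.map_addHaar_smul μ hR]
  exact hf.smul_measure ENNReal.ofReal_ne_top

section Scaling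

variable (w : E2 → ℂ) {lam : ℝ}

lemma integral_comp_smul_E2 {F : Type*} [NormedAddCommGroup F] [NormedSpace ℝ F]
    (f : E2 → F) (lam : ℝ) : ∫ x : E2, f (lam • x) = (lam ^ 2)⁻¹ • ∫ x : E2, f x := by
  rw [Measure.integral_comp_smul, finrank_euclideanSpace_fin, abs_of_nonneg (by positivity)]

lemma l2Sq_comp_smul (lam : ℝ) : l2Sq (fun x => w (lam • x)) = (lam ^ 2)⁻¹ * l2Sq w :=
  integral_comp_smul_E2 (fun y => ‖w y‖ ^ 2) lam

lemma moserIntegral_comp_smul (lam : ℝ) :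
    moserIntegral (fun x => w (lam • x)) = (lam ^ 2)⁻¹ * moserIntegral w :=
  integral_comp_smul_E2 (fun y => Real.exp (4 * π * ‖w y‖ ^ 2) - 1) lam

lemma norm_fderiv_comp_smul_sq (lam : ℝ) (x : E2) :
    ‖fderiv ℝ (fun x => w (lam • x)) x‖ ^ 2 = lam ^ 2 * ‖fderiv ℝ w (lam • x)‖ ^ 2 := by
  rw [fderiv_comp_smul, norm_smul, mul_pow, Real.norm_eq_abs, sq_abs]

lemma gradSq_comp_smul (hlam : lam ≠ 0) : gradSq (fun x => w (lam • x)) = gradSq w := by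
  simp only [gradSq, norm_fderiv_comp_smul_sq, integral_const_mul]
  rw [integral_comp_smul_E2 (fun y => ‖fderiv ℝ w y‖ ^ 2), smul_eq_mul,
    mul_inv_cancel_left₀ (pow_ne_zero 2 hlam)]

variable {w}

lemma MemH1.comp_smul (hw : MemH1 w) (hlam : lam ≠ 0) : MemH1 (fun x => w (lam • x)) := by
  obtain ⟨hw₂, hwd, hwg⟩ := hw
  refine ⟨hw₂.comp_smul hlam, hwd.comp (differentiable_id.const_smul lam), ?_⟩
  simp only [fderiv_comp_smul]
  exact (hwg.comp_smul hlam).const_smul lam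

end Scaling

lemma moserIntegral_eq_zero_of_l2Sq_eq_zero {w : E2 → ℂ} (hw : MemLp w 2 volume)
    (h : l2Sq w = 0) : moserIntegral w = 0 := by
  have hw0 : (fun x => ‖w x‖ ^ 2) =ᵐ[volume] 0 :=
    (integral_eq_zero_iff_of_nonneg (fun _ => by positivity)
      ((memLp_two_iff_integrable_sq_norm hw.1).mp hw)).mp h
  rw [moserIntegral, integral_congr_ae (g := 0) (by filter_upwards [hw0] with x hx; simp [hx])]
  simp

lemma moserIntegral_le {κ : ℝ} (hκ : IsMoserBound κ) {w : E2 → ℂ} (hw : MemH1 w)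
    (hg : gradSq w < 1) :
    moserIntegral w ≤ κ * l2Sq w / (1 - gradSq w) := by
  rcases (l2Sq_nonneg w).eq_or_lt with hm | hm
  · rw [moserIntegral_eq_zero_of_l2Sq_eq_zero hw.1 hm.symm, ← hm, mul_zero, zero_div]
  have hlam2 : 0 < l2Sq w / (1 - gradSq w) := div_pos hm (by linarith)
  set lam := √(l2Sq w / (1 - gradSq w))
  have hlam : lam ^ 2 = l2Sq w / (1 - gradSq w) := Real.sq_sqrt hlam2.le
  have hlam0 : lam ≠ 0 := (Real.sqrt_pos.mpr hlam2).ne'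
  have hbound := hκ _ (hw.comp_smul hlam0) (by
    rw [l2Sq_comp_smul, gradSq_comp_smul w hlam0, hlam, inv_div, div_mul_cancel₀ _ hm.ne']
    linarith)
  rw [moserIntegral_comp_smul, inv_mul_le_iff₀ (by positivity), hlam] at hbound
  exact hbound.trans_eq (by ring)

lemma gradSq_growth_le {μ κ : ℝ} (hμ₀ : 0 ≤ μ) (hμ₁ : μ ≤ 1) (hκ : IsMoserBound κ)
    {v w : E2 → ℂ} (hv : MemH1 v) (hvexp : ExpIntegrable v) (hg : gradSq v < 1)
    (hmass : l2Sq v = l2Sq w) (henergy : Emu μ v = Emu μ w) :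
    (gradSq v - gradSq w) * (4 * π) * (1 - gradSq v) ≤ κ * l2Sq w := by
  have hFw : 0 ≤ ∫ x, Fmu μ (w x) := integral_nonneg fun x => Fmu_nonneg hμ₁ _
  have hFv := integral_Fmu_le hμ₀ hμ₁ hvexp
  have hJ := moserIntegral_le hκ hv hg
  rw [hmass, le_div_iff₀ (by linarith)] at hJ
  unfold Emu at henergy
  have hgrowth : (gradSq v - gradSq w) * (4 * π) ≤ moserIntegral v := by
    rw [le_div_iff₀ (by positivity)] at hFv
    nlinarith [Real.pi_pos]
  nlinarith

lemma mul_lt_mul_sq_of_sqrt_div_lt_sqrt {p κ m a : ℝ} (hp : 0 < p) (hm : 0 ≤ m) (ha : a < 1)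
    (h : √m / (1 - a) < √(p / κ)) : κ * m < p * (1 - a) ^ 2 := by
  have hpa : 0 < p * (1 - a) ^ 2 := by have := sub_pos.2 ha; positivity
  rcases le_or_gt κ 0 with hκ | hκ
  · linarith [mul_nonpos_of_nonpos_of_nonneg hκ hm]
  have h2 := pow_lt_pow_left₀ h (div_nonneg (Real.sqrt_nonneg m) (by linarith)) two_ne_zero
  rw [div_pow, Real.sq_sqrt hm, Real.sq_sqrt (by positivity),
    div_lt_div_iff₀ (by nlinarith) hκ] at h2
  linarith

lemma lt_of_continuousOn_Icc_of_forall_ne {α δ : Type*} [ConditionallyCompleteLinearOrder α]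
    [TopologicalSpace α] [OrderTopology α] [DenselyOrdered α] [LinearOrder δ]
    [TopologicalSpace δ] [OrderClosedTopology δ] {f : α → δ} {a b : α} {c : δ} (hab : a ≤ b)
    (hf : ContinuousOn f (Set.Icc a b)) (ha : f a < c) (hne : ∀ s ∈ Set.Icc a b, f s ≠ c) :
    f b < c := by
  by_contra! hb
  obtain ⟨s, hs, hfs⟩ := intermediate_value_Icc hab hf ⟨ha.le, hb⟩
  exact hne s hs hfs

theorem global_existence_small_data_general (μ : ℝ) (hμ : μ = 0 ∨ μ = 1) (κ : ℝ)
    (hκ : IsLUB {r : ℝ | ∃ v : E2 → ℂ, MemH1 v ∧ l2Sq v + gradSq v ≤ 1 ∧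
        r = ∫ x : E2, (Real.exp (4 * π * ‖v x‖ ^ 2) - 1)} κ)
    (u₀ : E2 → ℂ)
    (h₀grad : Real.sqrt (gradSq u₀) < 1)
    (h₀small : Real.sqrt (l2Sq u₀) / (1 - gradSq u₀) < Real.sqrt (π / κ))
    -- the maximal solution on `[0, T*)`
    (Tstar : ℝ≥0∞) (hT : 0 < Tstar) (u : ℝ → E2 → ℂ) (hu0 : u 0 = u₀)
    (hmem : ∀ t : ℝ, 0 ≤ t → ENNReal.ofReal t < Tstar → MemH1 (u t) ∧ ExpIntegrable (u t))
    (hmass : ∀ t : ℝ, 0 ≤ t → ENNReal.ofReal t < Tstar → l2Sq (u t) = l2Sq u₀)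
    (henergy : ∀ t : ℝ, 0 ≤ t → ENNReal.ofReal t < Tstar → Emu μ (u t) = Emu μ u₀)
    -- continuity of the flow in `H¹`
    (hcont : ContinuousOn (fun t => gradSq (u t))
      {t : ℝ | 0 ≤ t ∧ ENNReal.ofReal t < Tstar})
    -- the blow-up alternative
    (halt : Tstar ≠ ⊤ →
      Filter.limsup (fun t => Real.sqrt (gradSq (u t))) (𝓝[<] Tstar.toReal) = 1) :
    Tstar = ⊤ := by
  by_contra hTfin
  have hμ₀ : 0 ≤ μ := by rcases hμ with rfl | rfl <;> norm_num
  have hμ₁ : μ ≤ 1 := by rcases hμ with rfl | rfl <;> norm_num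
  have hκbound : IsMoserBound κ := fun v hv h => hκ.1 ⟨v, hv, h, rfl⟩
  set a₀ := gradSq u₀
  have ha₀ : a₀ < 1 := by simpa using (Real.sqrt_lt' one_pos).mp h₀grad
  have hsmall := mul_lt_mul_sq_of_sqrt_div_lt_sqrt Real.pi_pos (l2Sq_nonneg u₀) ha₀ h₀small
  set c := (1 + a₀) / 2 with hc
  -- `(c - a₀) * (4 * π) * (1 - c) = π * (1 - a₀) ^ 2`, so `gradSq_growth_le` rules out level `c`
  have hne : ∀ t, 0 ≤ t → ENNReal.ofReal t < Tstar → gradSq (u t) ≠ c := fun t ht htT hgc => by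
    have := gradSq_growth_le hμ₀ hμ₁ hκbound (hmem t ht htT).1 (hmem t ht htT).2 (by linarith)
      (hmass t ht htT) (henergy t ht htT)
    rw [hgc, hc] at this
    nlinarith
  have hlt : ∀ t, 0 ≤ t → ENNReal.ofReal t < Tstar → gradSq (u t) < c := fun t ht htT => by
    have hIcc : ∀ s ∈ Set.Icc 0 t, 0 ≤ s ∧ ENNReal.ofReal s < Tstar :=
      fun s hs => ⟨hs.1, (ENNReal.ofReal_le_ofReal hs.2).trans_lt htT⟩
    exact lt_of_continuousOn_Icc_of_forall_ne (f := fun s => gradSq (u s)) ht (hcont.mono hIcc)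
      (by simp only [hu0]; linarith) fun s hs => hne s (hIcc s hs).1 (hIcc s hs).2
  have hT₀ : 0 < Tstar.toReal := ENNReal.toReal_pos hT.ne' hTfin
  have hev : ∀ᶠ t in 𝓝[<] Tstar.toReal, √(gradSq (u t)) ≤ √c := by
    filter_upwards [Ioo_mem_nhdsLT hT₀] with t ht
    exact Real.sqrt_le_sqrt
      (hlt t ht.1.le ((ENNReal.ofReal_lt_iff_lt_toReal ht.1.le hTfin).mpr ht.2)).le
  have hlimsup := limsup_le_of_le (isCoboundedUnder_le_of_eventually_le _
    (.of_forall fun _ => Real.sqrt_nonneg _)) hev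
  rw [halt hTfin] at hlimsup
  exact absurd hlimsup (not_le.mpr ((Real.sqrt_lt' one_pos).mpr (by linarith)))

/-- global existence under the smallness condition
`‖u₀‖_{L²}/(1 - ‖∇u₀‖²_{L²}) < √(π/κ)`. The maximal solution of the focusing NLS
`i∂ₜu + Δu = -f_μ(u)`, `u(0) = u₀` (with conserved mass and energy, continuous `H¹` flow,
and the blow-up alternative) is global: `T* = ∞`. -/
theorem global_existence_small_data (μ : ℝ) (hμ : μ = 0 ∨ μ = 1) (κ : ℝ)
    (hκ : IsLUB {r : ℝ | ∃ v : E2 → ℂ, MemH1 v ∧ l2Sq v + gradSq v ≤ 1 ∧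
        r = ∫ x : E2, (Real.exp (4 * π * ‖v x‖ ^ 2) - 1)} κ)
    (u₀ : E2 → ℂ) (h₀mem : MemH1 u₀) (h₀exp : ExpIntegrable u₀)
    (h₀grad : Real.sqrt (gradSq u₀) < 1)
    (h₀small : Real.sqrt (l2Sq u₀) / (1 - gradSq u₀) < Real.sqrt (π / κ))
    -- the maximal solution on `[0, T*)`
    (Tstar : ℝ≥0∞) (hT : 0 < Tstar) (u : ℝ → E2 → ℂ) (hu0 : u 0 = u₀)
    (hmem : ∀ t : ℝ, 0 ≤ t → ENNReal.ofReal t < Tstar → MemH1 (u t) ∧ ExpIntegrable (u t))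
    (hsol : ∀ t : ℝ, 0 ≤ t → ENNReal.ofReal t < Tstar → ∀ x : E2,
      Complex.I * deriv (fun s => u s x) t + lap (u t) x = -(fmu μ (u t x)))
    (hmass : ∀ t : ℝ, 0 ≤ t → ENNReal.ofReal t < Tstar → l2Sq (u t) = l2Sq u₀)
    (henergy : ∀ t : ℝ, 0 ≤ t → ENNReal.ofReal t < Tstar → Emu μ (u t) = Emu μ u₀)
    -- continuity of the flow in `H¹`
    (hcont : ContinuousOn (fun t => gradSq (u t))
      {t : ℝ | 0 ≤ t ∧ ENNReal.ofReal t < Tstar})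
    -- the blow-up alternative
    (halt : Tstar ≠ ⊤ →
      Filter.limsup (fun t => Real.sqrt (gradSq (u t))) (𝓝[<] Tstar.toReal) = 1) :
    Tstar = ⊤ :=
  global_existence_small_data_general μ hμ κ hκ u₀ h₀grad h₀small Tstar hT u hu0 hmem hmass henergy
    hcont halt
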